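/- (Hölder's inequality in Lorentz spaces) Let 1 ≤ p, p₁, p₂ < ∞ and 1 ≤ q, q₁, q₂ ≤ ∞ satisfy 1/p = 1/p₁ + 1/p₂ and 1/q = 1/q₁ + 1/q₂. Then there is a constant C such that ‖f·g‖_{L^{p,q}} ≤ C ‖f‖_{L^{p₁,q₁}} ‖g‖_{L^{p₂,q₂}} for all measurable f, g. -/

import Mathlib

/-!
Write `f*` for the decreasing rearrangement `f*(t) = |{l > 0 : μ {‖f‖ > l} > t}|`. Fubini's
theorem on `{(l, t) : t < μ {‖f‖ > l}}` identifies the Lorentz quasi-norm with `p^(-1/q)` times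
the `L^q(dt/t)` norm of `t^(1/p) f*(t)` (a supremum for `q = ∞`). Since
`{‖f g‖ > a b} ⊆ {‖f‖ > a} ∪ {‖g‖ > b}`, one has `(f g)*(2t) ≤ f*(t) g*(t)`; the measure `dt/t`
is dilation invariant, so Hölder's inequality in `L^q(dt/t)` with `1/q = 1/q₁ + 1/q₂` gives the
theorem with `C = 2^(1/p) p^(-1/q) p₁^(1/q₁) p₂^(1/q₂)`.
-/

open MeasureTheory ENNReal

/-- The Lorentz quasi-norm `‖f‖_{L^{p,q}} = ‖ λ · μ({|f| > λ})^{1/p} ‖_{L^q((0,∞), dλ/λ)}`,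
with the usual supremum modification for `q = ∞`. -/
noncomputable def lorentzNorm {α : Type*} [MeasurableSpace α] (μ : Measure α)
    (p : ℝ) (q : ℝ≥0∞) (f : α → ℂ) : ℝ≥0∞ :=
  if q = ⊤ then
    ⨆ (l : ℝ) (_ : 0 < l), ENNReal.ofReal l * (μ {x | l < ‖f x‖}) ^ (1 / p)
  else
    (∫⁻ l in Set.Ioi (0 : ℝ),
        (ENNReal.ofReal l * (μ {x | l < ‖f x‖}) ^ (1 / p)) ^ q.toReal
          * (ENNReal.ofReal l)⁻¹) ^ (1 / q.toReal)

open Set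

theorem ENNReal.rpow_eq_iSup_ofReal_lt (m : ℝ≥0∞) {b : ℝ} (hb : 0 < b) :
    m ^ b = ⨆ (l : ℝ) (_ : 0 < l) (_ : ENNReal.ofReal l < m), ENNReal.ofReal l ^ b := by
  refine le_antisymm (le_of_forall_lt fun y hy => ?_)
    (iSup₂_le fun l _ => iSup_le fun hl => rpow_le_rpow hl.le hb.le)
  obtain ⟨l, -, hyl, hlm⟩ := lt_iff_exists_real_btwn.1 ((rpow_inv_lt_iff hb).2 hy)
  have hl : 0 < l := ENNReal.ofReal_pos.1 (zero_le.trans_lt hyl)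
  exact ((rpow_inv_lt_iff hb).1 hyl).trans_le (le_iSup₂_of_le l hl (le_iSup_of_le hlm le_rfl))

theorem ENNReal.exists_lt_ofReal_mul_le {a b : ℝ≥0∞} (ha : a ≠ ⊤) (hb : b ≠ ⊤) {l : ℝ}
    (h : a * b < ENNReal.ofReal l) :
    ∃ a' b' : ℝ, a < ENNReal.ofReal a' ∧ b < ENNReal.ofReal b' ∧ a' * b' ≤ l := by
  have hlt : a.toReal * b.toReal < l := by
    rw [← toReal_mul]
    exact toReal_lt_of_lt_ofReal h
  have hnear : ∀ᶠ ε in nhdsWithin (0 : ℝ) (Ioi 0), (a.toReal + ε) * (b.toReal + ε) < l := by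
    refine nhdsWithin_le_nhds (Continuous.tendsto' (by fun_prop) 0 _ ?_ |>.eventually
      (gt_mem_nhds hlt))
    simp
  obtain ⟨ε, hεl, hε⟩ := (hnear.and self_mem_nhdsWithin).exists
  refine ⟨a.toReal + ε, b.toReal + ε, ?_, ?_, hεl.le⟩
  · exact (lt_ofReal_iff_toReal_lt ha).2 (lt_add_of_pos_right _ hε)
  · exact (lt_ofReal_iff_toReal_lt hb).2 (lt_add_of_pos_right _ hε)

theorem ENNReal.exists_pos_real_le_ofReal {D : ℝ≥0∞} (hD : D ≠ ⊤) :
    ∃ C : ℝ, 0 < C ∧ D ≤ ENNReal.ofReal C :=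
  ⟨D.toReal + 1, by positivity, (ofReal_toReal hD).symm.le.trans (ofReal_le_ofReal (by linarith))⟩

theorem ENNReal.ofReal_rpow_mul_mul_inv {l r : ℝ} (hl : 0 < l) (hr : 0 ≤ r) (x : ℝ≥0∞) (a : ℝ) :
    (ENNReal.ofReal l ^ a * x) ^ r * (ENNReal.ofReal l)⁻¹ =
      ENNReal.ofReal l ^ (a * r - 1) * x ^ r := by
  rw [mul_rpow_of_nonneg _ _ hr, ← rpow_mul, rpow_sub _ _ (by simpa using hl) ofReal_ne_top,
    rpow_one, div_eq_mul_inv]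
  ring

theorem ENNReal.ne_zero_of_inv_eq_inv_add_inv {q q₁ q₂ : ℝ≥0∞} (hq₁ : q₁ ≠ 0) (hq₂ : q₂ ≠ 0)
    (hqe : q⁻¹ = q₁⁻¹ + q₂⁻¹) : q ≠ 0 := by
  rw [← ENNReal.inv_ne_top, hqe]
  exact add_ne_top.2 ⟨inv_ne_top.2 hq₁, inv_ne_top.2 hq₂⟩

theorem pos_of_one_div_eq_add {p p₁ p₂ : ℝ} (hp₁ : 0 < p₁) (hp₂ : 0 < p₂)
    (hpe : 1 / p = 1 / p₁ + 1 / p₂) : 0 < p :=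
  one_div_pos.1 (hpe ▸ by positivity)

theorem setLIntegral_indicator_eq_inter {α : Type*} [MeasurableSpace α] {μ : Measure α}
    {s t : Set α} (ht : MeasurableSet t) (g : α → ℝ≥0∞) :
    ∫⁻ x in s, t.indicator g x ∂μ = ∫⁻ x in s ∩ t, g x ∂μ := by
  rw [lintegral_indicator ht, Measure.restrict_restrict ht, inter_comm]

theorem lintegral_Ioo_zero_rpow_sub_one {c r : ℝ} (hc : 0 ≤ c) (hr : 0 < r) :
    ∫⁻ t in Ioo 0 c, ENNReal.ofReal t ^ (r - 1) = ENNReal.ofReal c ^ r / ENNReal.ofReal r := by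
  have hint : IntegrableOn (fun t : ℝ => t ^ (r - 1)) (Ioo 0 c) :=
    (intervalIntegral.intervalIntegrable_rpow' (by linarith)).1.mono_set Ioo_subset_Ioc_self
  calc ∫⁻ t in Ioo 0 c, ENNReal.ofReal t ^ (r - 1)
      = ∫⁻ t in Ioo 0 c, ENNReal.ofReal (t ^ (r - 1)) :=
        setLIntegral_congr_fun measurableSet_Ioo fun t ht => ofReal_rpow_of_pos ht.1
    _ = ENNReal.ofReal (∫ t in (0 : ℝ)..c, t ^ (r - 1)) := by
        rw [intervalIntegral.integral_of_le hc, integral_Ioc_eq_integral_Ioo,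
          ofReal_integral_eq_lintegral_ofReal hint]
        filter_upwards [self_mem_ae_restrict measurableSet_Ioo] with t ht
        exact Real.rpow_nonneg ht.1.le _
    _ = ENNReal.ofReal c ^ r / ENNReal.ofReal r := by
        rw [integral_rpow (Or.inl (by linarith)), sub_add_cancel, Real.zero_rpow hr.ne', sub_zero,
          ofReal_div_of_pos hr, ofReal_rpow_of_nonneg hc hr.le]

namespace IsLowerSet

variable {L : Set ℝ}

theorem ofReal_le_volume_Ioi_inter (hL : IsLowerSet L) {l : ℝ} (hl : l ∈ L) :
    ENNReal.ofReal l ≤ volume (Ioi 0 ∩ L) := by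
  calc ENNReal.ofReal l = volume (Ioc 0 l) := by rw [Real.volume_Ioc, sub_zero]
    _ ≤ volume (Ioi 0 ∩ L) := measure_mono fun x hx => ⟨hx.1, hL hx.2 hl⟩

theorem mem_of_ofReal_lt_volume_Ioi_inter (hL : IsLowerSet L) {l : ℝ}
    (h : ENNReal.ofReal l < volume (Ioi 0 ∩ L)) : l ∈ L := by
  by_contra hl
  have hsub : Ioi 0 ∩ L ⊆ Ioo 0 l := fun x hx =>
    ⟨hx.1, not_le.1 fun hlx => hl (hL hlx hx.2)⟩
  exact (measure_mono hsub).not_gt (by rwa [Real.volume_Ioo, sub_zero])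

theorem lintegral_Ioi_inter_rpow_sub_one (hL : IsLowerSet L) {r : ℝ} (hr : 0 < r) :
    ∫⁻ t in Ioi 0 ∩ L, ENNReal.ofReal t ^ (r - 1) =
      volume (Ioi 0 ∩ L) ^ r / ENNReal.ofReal r := by
  refine le_antisymm ?_ ?_
  · rcases eq_or_ne (volume (Ioi 0 ∩ L)) ⊤ with h | h
    · simp [h, top_rpow_of_pos hr, top_div_of_ne_top]
    have hsub : Ioi 0 ∩ L ⊆ Ioc 0 (volume (Ioi 0 ∩ L)).toReal := fun l hl =>
      ⟨hl.1, (ofReal_le_iff_le_toReal h).1 (hL.ofReal_le_volume_Ioi_inter hl.2)⟩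
    calc ∫⁻ t in Ioi 0 ∩ L, ENNReal.ofReal t ^ (r - 1)
        ≤ ∫⁻ t in Ioc 0 (volume (Ioi 0 ∩ L)).toReal, ENNReal.ofReal t ^ (r - 1) :=
          lintegral_mono_set hsub
      _ = volume (Ioi 0 ∩ L) ^ r / ENNReal.ofReal r := by
          rw [← setLIntegral_congr Ioo_ae_eq_Ioc, lintegral_Ioo_zero_rpow_sub_one toReal_nonneg hr,
            ofReal_toReal h]
  · rw [rpow_eq_iSup_ofReal_lt _ hr]
    simp only [iSup_div]
    refine iSup₂_le fun l hl => iSup_le fun hlL => ?_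
    rw [← lintegral_Ioo_zero_rpow_sub_one hl.le hr]
    exact lintegral_mono_set fun x hx =>
      ⟨hx.1, hL hx.2.le (hL.mem_of_ofReal_lt_volume_Ioi_inter hlL)⟩

end IsLowerSet

theorem isLowerSet_setOf_ofReal_lt (c : ℝ≥0∞) : IsLowerSet {t : ℝ | ENNReal.ofReal t < c} :=
  fun _ _ hba ha => (ofReal_le_ofReal hba).trans_lt ha

theorem volume_Ioi_inter_ofReal_lt (c : ℝ≥0∞) :
    volume (Ioi 0 ∩ {t : ℝ | ENNReal.ofReal t < c}) = c := by
  have hL := isLowerSet_setOf_ofReal_lt c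
  refine le_antisymm (not_lt.1 fun h => ?_) (le_of_forall_lt fun y hy => ?_)
  · obtain ⟨l, -, hcl, hl⟩ := lt_iff_exists_real_btwn.1 h
    exact hcl.not_gt (hL.mem_of_ofReal_lt_volume_Ioi_inter hl)
  · obtain ⟨l, -, hyl, hlc⟩ := lt_iff_exists_real_btwn.1 hy
    exact hyl.trans_le (hL.ofReal_le_volume_Ioi_inter hlc)

theorem rpow_eq_ofReal_mul_lintegral (c : ℝ≥0∞) {ρ : ℝ} (hρ : 0 < ρ) :
    c ^ ρ = ENNReal.ofReal ρ *
      ∫⁻ t in Ioi 0 ∩ {t : ℝ | ENNReal.ofReal t < c}, ENNReal.ofReal t ^ (ρ - 1) := by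
  rw [(isLowerSet_setOf_ofReal_lt c).lintegral_Ioi_inter_rpow_sub_one hρ,
    volume_Ioi_inter_ofReal_lt,
    ENNReal.mul_div_cancel (by simpa using hρ) ofReal_ne_top]

/-- For antitone `φ`, the generalized inverse `t ↦ |{l > 0 : φ l > t}|` of `φ` on `(0, ∞)`. -/
noncomputable def superlevelVolume (φ : ℝ → ℝ≥0∞) (t : ℝ) : ℝ≥0∞ :=
  volume (Ioi 0 ∩ {l | ENNReal.ofReal t < φ l})

theorem antitone_superlevelVolume (φ : ℝ → ℝ≥0∞) : Antitone (superlevelVolume φ) :=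
  fun _ _ hst => measure_mono fun _ hl => ⟨hl.1, (ofReal_le_ofReal hst).trans_lt hl.2⟩

namespace Antitone

variable {φ : ℝ → ℝ≥0∞}

theorem isLowerSet_setOf_ofReal_lt (hφ : Antitone φ) (t : ℝ) :
    IsLowerSet {l | ENNReal.ofReal t < φ l} :=
  fun _ _ hba ha => ha.trans_le (hφ hba)

theorem ofReal_le_superlevelVolume (hφ : Antitone φ) {l t : ℝ} (h : ENNReal.ofReal t < φ l) :
    ENNReal.ofReal l ≤ superlevelVolume φ t :=
  (hφ.isLowerSet_setOf_ofReal_lt t).ofReal_le_volume_Ioi_inter h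

theorem ofReal_lt_of_lt_superlevelVolume (hφ : Antitone φ) {l t : ℝ}
    (h : ENNReal.ofReal l < superlevelVolume φ t) : ENNReal.ofReal t < φ l :=
  (hφ.isLowerSet_setOf_ofReal_lt t).mem_of_ofReal_lt_volume_Ioi_inter h

theorem le_ofReal_of_superlevelVolume_lt (hφ : Antitone φ) {l t : ℝ}
    (h : superlevelVolume φ t < ENNReal.ofReal l) : φ l ≤ ENNReal.ofReal t :=
  not_lt.1 fun h' => (hφ.ofReal_le_superlevelVolume h').not_gt h

theorem superlevelVolume_le (hφ : Antitone φ) {t : ℝ} {c : ℝ≥0∞}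
    (h : ∀ l : ℝ, c < ENNReal.ofReal l → φ l ≤ ENNReal.ofReal t) : superlevelVolume φ t ≤ c :=
  not_lt.1 fun hc => by
    obtain ⟨l, -, hcl, hl⟩ := lt_iff_exists_real_btwn.1 hc
    exact (h l hcl).not_gt (hφ.ofReal_lt_of_lt_superlevelVolume hl)

theorem iSup_ofReal_mul_rpow (hφ : Antitone φ) {a : ℝ} (ha : 0 < a) :
    ⨆ (l : ℝ) (_ : 0 < l), ENNReal.ofReal l * φ l ^ a =
      ⨆ (t : ℝ) (_ : 0 < t), ENNReal.ofReal t ^ a * superlevelVolume φ t := by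
  refine le_antisymm (iSup₂_le fun l _ => ?_) (iSup₂_le fun t _ => ?_)
  · rw [rpow_eq_iSup_ofReal_lt (φ l) ha]
    simp only [mul_iSup]
    refine iSup₂_le fun t ht => iSup_le fun htl => le_iSup₂_of_le t ht ?_
    rw [mul_comm]
    gcongr
    exact hφ.ofReal_le_superlevelVolume htl
  · have h := rpow_eq_iSup_ofReal_lt (superlevelVolume φ t) one_pos
    simp only [rpow_one] at h
    rw [h]
    simp only [mul_iSup]
    refine iSup₂_le fun l hl => iSup_le fun hlt => le_iSup₂_of_le l hl ?_
    rw [mul_comm]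
    gcongr
    exact (hφ.ofReal_lt_of_lt_superlevelVolume hlt).le

theorem lintegral_rpow_mul_rpow (hφ : Antitone φ) {β ρ : ℝ} (hβ : 0 < β) (hρ : 0 < ρ) :
    ∫⁻ l in Ioi 0, ENNReal.ofReal l ^ (β - 1) * φ l ^ ρ =
      ENNReal.ofReal ρ / ENNReal.ofReal β *
        ∫⁻ t in Ioi 0, ENNReal.ofReal t ^ (ρ - 1) * superlevelVolume φ t ^ β := by
  set A := {x : ℝ × ℝ | ENNReal.ofReal x.2 < φ x.1}
  have hA : MeasurableSet A :=
    measurableSet_lt (measurable_ofReal.comp measurable_snd) (hφ.measurable.comp measurable_fst)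
  set F : ℝ → ℝ → ℝ≥0∞ := fun l t =>
    A.indicator (fun x => ENNReal.ofReal x.1 ^ (β - 1) * ENNReal.ofReal x.2 ^ (ρ - 1)) (l, t)
  have hF : Measurable (Function.uncurry F) := Measurable.indicator (by fun_prop) hA
  have integral_dt (l : ℝ) : ∫⁻ t in Ioi 0, F l t = ENNReal.ofReal l ^ (β - 1) *
      ∫⁻ t in Ioi 0 ∩ {t | ENNReal.ofReal t < φ l}, ENNReal.ofReal t ^ (ρ - 1) := by
    have hs : MeasurableSet {t : ℝ | ENNReal.ofReal t < φ l} :=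
      measurableSet_lt measurable_ofReal measurable_const
    rw [← setLIntegral_indicator_eq_inter hs,
      ← lintegral_const_mul _ (Measurable.indicator (by fun_prop) hs)]
    congr 1 with t
    by_cases h : ENNReal.ofReal t < φ l <;> simp [F, A, h]
  have integral_dl (t : ℝ) : ∫⁻ l in Ioi 0, F l t = ENNReal.ofReal t ^ (ρ - 1) *
      ∫⁻ l in Ioi 0 ∩ {l | ENNReal.ofReal t < φ l}, ENNReal.ofReal l ^ (β - 1) := by
    have hs : MeasurableSet {l : ℝ | ENNReal.ofReal t < φ l} :=
      measurableSet_lt measurable_const hφ.measurable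
    rw [← setLIntegral_indicator_eq_inter hs,
      ← lintegral_const_mul _ (Measurable.indicator (by fun_prop) hs)]
    congr 1 with l
    by_cases h : ENNReal.ofReal t < φ l <;> simp [F, A, h, mul_comm]
  calc ∫⁻ l in Ioi 0, ENNReal.ofReal l ^ (β - 1) * φ l ^ ρ
      = ∫⁻ l in Ioi 0, ENNReal.ofReal ρ * ∫⁻ t in Ioi 0, F l t := by
        congr 1 with l
        rw [integral_dt, rpow_eq_ofReal_mul_lintegral (φ l) hρ]
        ring
    _ = ENNReal.ofReal ρ * ∫⁻ t in Ioi 0, ∫⁻ l in Ioi 0, F l t := by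
        rw [lintegral_const_mul' _ _ ofReal_ne_top, lintegral_lintegral_swap hF.aemeasurable]
    _ = ENNReal.ofReal ρ * ∫⁻ t in Ioi 0,
          ENNReal.ofReal t ^ (ρ - 1) * superlevelVolume φ t ^ β * (ENNReal.ofReal β)⁻¹ := by
        congr 2 with t
        rw [integral_dl, (hφ.isLowerSet_setOf_ofReal_lt t).lintegral_Ioi_inter_rpow_sub_one hβ,
          superlevelVolume, div_eq_mul_inv, mul_assoc]
    _ = _ := by
        rw [lintegral_mul_const' _ _ (by simpa using hβ), div_eq_mul_inv]
        ring

end Antitone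

/-- The `L^q` norm on `(0, ∞)` for the Haar measure `dt / t`, with a genuine supremum for
`q = ∞`; `lorentzNorm μ p q f` is `haarLqNorm q` of `l ↦ l * μ {‖f‖ > l} ^ (1 / p)`. -/
noncomputable def haarLqNorm (q : ℝ≥0∞) (F : ℝ → ℝ≥0∞) : ℝ≥0∞ :=
  if q = ⊤ then ⨆ (t : ℝ) (_ : 0 < t), F t
  else (∫⁻ t in Ioi 0, F t ^ q.toReal * (ENNReal.ofReal t)⁻¹) ^ (1 / q.toReal)

theorem setLIntegral_Ioi_comp_mul_mul_inv {c : ℝ} (hc : 0 < c) (g : ℝ → ℝ≥0∞) :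
    ∫⁻ t in Ioi 0, g (c * t) * (ENNReal.ofReal t)⁻¹ =
      ∫⁻ t in Ioi 0, g t * (ENNReal.ofReal t)⁻¹ := by
  have h := lintegral_image_eq_lintegral_abs_deriv_mul (measurableSet_Ioi (a := 0))
    (fun x _ => ((hasDerivAt_id' x).const_mul c).hasDerivWithinAt)
    (mul_right_injective₀ hc.ne').injOn fun t => g t * (ENNReal.ofReal t)⁻¹
  rw [image_mul_left_Ioi hc, mul_zero] at h
  rw [h]
  refine setLIntegral_congr_fun measurableSet_Ioi fun t ht => ?_
  have hc' : ENNReal.ofReal c ≠ 0 := by simpa using hc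
  rw [mul_one, abs_of_pos hc, ofReal_mul hc.le, ENNReal.mul_inv (.inl hc') (.inl ofReal_ne_top),
    mul_left_comm, ← mul_assoc (ENNReal.ofReal c), ENNReal.mul_inv_cancel hc' ofReal_ne_top,
    one_mul]

theorem haarLqNorm_top (F : ℝ → ℝ≥0∞) : haarLqNorm ⊤ F = ⨆ (t : ℝ) (_ : 0 < t), F t :=
  if_pos rfl

theorem haarLqNorm_of_ne_top {q : ℝ≥0∞} (hq : q ≠ ⊤) (F : ℝ → ℝ≥0∞) :
    haarLqNorm q F = (∫⁻ t in Ioi 0, F t ^ q.toReal * (ENNReal.ofReal t)⁻¹) ^ (1 / q.toReal) :=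
  if_neg hq

theorem haarLqNorm_mono {q : ℝ≥0∞} {F H : ℝ → ℝ≥0∞} (h : ∀ t, 0 < t → F t ≤ H t) :
    haarLqNorm q F ≤ haarLqNorm q H := by
  unfold haarLqNorm
  split_ifs
  · exact iSup₂_mono h
  · gcongr ?_ ^ _
    exact setLIntegral_mono' measurableSet_Ioi fun t ht => by gcongr; exact h t ht

theorem haarLqNorm_const_mul {q : ℝ≥0∞} (hq : q ≠ 0) {F : ℝ → ℝ≥0∞} (hF : Measurable F)
    (c : ℝ≥0∞) : haarLqNorm q (fun t => c * F t) = c * haarLqNorm q F := by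
  unfold haarLqNorm
  split_ifs with hqt
  · simp only [mul_iSup]
  · have hr : 0 < q.toReal := toReal_pos hq hqt
    simp_rw [mul_rpow_of_nonneg _ _ hr.le, mul_assoc]
    rw [lintegral_const_mul _ (by fun_prop),
      mul_rpow_of_nonneg _ _ (by positivity), one_div, rpow_rpow_inv hr.ne']

theorem haarLqNorm_comp_mul {q : ℝ≥0∞} {c : ℝ} (hc : 0 < c) (F : ℝ → ℝ≥0∞) :
    haarLqNorm q (fun t => F (c * t)) = haarLqNorm q F := by
  unfold haarLqNorm
  split_ifs
  · refine le_antisymm (iSup₂_le fun t ht => le_iSup₂_of_le (c * t) (by positivity) le_rfl)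
      (iSup₂_le fun s hs => le_iSup₂_of_le (s / c) (by positivity) ?_)
    simp only [mul_div_cancel₀ s hc.ne', le_rfl]
  · rw [setLIntegral_Ioi_comp_mul_mul_inv hc fun s => F s ^ q.toReal]

theorem haarLqNorm_mul_le_top_mul {q : ℝ≥0∞} (hq : q ≠ 0) (F : ℝ → ℝ≥0∞) {H : ℝ → ℝ≥0∞}
    (hH : Measurable H) : haarLqNorm q (fun t => F t * H t) ≤ haarLqNorm ⊤ F * haarLqNorm q H := by
  rw [← haarLqNorm_const_mul hq hH]
  refine haarLqNorm_mono fun t ht => ?_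
  gcongr
  rw [haarLqNorm_top]
  exact le_iSup₂_of_le t ht le_rfl

theorem haarLqNorm_mul_le_of_ne_top {q q₁ q₂ : ℝ≥0∞} (hq₁ : q₁ ≠ 0) (hq₁' : q₁ ≠ ⊤)
    (hq₂ : q₂ ≠ 0) (hq₂' : q₂ ≠ ⊤) (hqe : q⁻¹ = q₁⁻¹ + q₂⁻¹) {F H : ℝ → ℝ≥0∞}
    (hF : Measurable F) (hH : Measurable H) :
    haarLqNorm q (fun t => F t * H t) ≤ haarLqNorm q₁ F * haarLqNorm q₂ H := by
  have hq := ne_zero_of_inv_eq_inv_add_inv hq₁ hq₂ hqe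
  have hq' : q ≠ ⊤ := by
    rw [← ENNReal.inv_ne_zero, hqe]
    exact add_ne_zero.2 (.inl (ENNReal.inv_ne_zero.2 hq₁'))
  have hlt : q.toReal < q₁.toReal := by
    refine toReal_strict_mono hq₁' (ENNReal.inv_lt_inv.1 ?_)
    rw [hqe]
    exact ENNReal.lt_add_right (inv_ne_top.2 hq₁) (ENNReal.inv_ne_zero.2 hq₂')
  have hre : 1 / q.toReal = 1 / q₁.toReal + 1 / q₂.toReal := by
    simpa only [one_div, toReal_inv, toReal_add (inv_ne_top.2 hq₁) (inv_ne_top.2 hq₂)] using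
      congrArg ENNReal.toReal hqe
  set ν := (volume.restrict (Ioi (0 : ℝ))).withDensity fun t => (ENNReal.ofReal t)⁻¹
  have hν (G : ℝ → ℝ≥0∞) : ∫⁻ t in Ioi 0, G t * (ENNReal.ofReal t)⁻¹ = ∫⁻ t, G t ∂ν := by
    rw [lintegral_withDensity_eq_lintegral_mul_non_measurable _ (by fun_prop)]
    · simp only [Pi.mul_apply, mul_comm]
    · filter_upwards [self_mem_ae_restrict measurableSet_Ioi] with t ht
      simpa using ht
  simp only [haarLqNorm_of_ne_top, hq', hq₁', hq₂', ne_eq, not_false_eq_true, hν]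
  exact ENNReal.lintegral_Lp_mul_le_Lq_mul_Lr (toReal_pos hq hq') hlt hre ν
    hF.aemeasurable hH.aemeasurable

theorem haarLqNorm_mul_le {q q₁ q₂ : ℝ≥0∞} (hq₁ : q₁ ≠ 0) (hq₂ : q₂ ≠ 0)
    (hqe : q⁻¹ = q₁⁻¹ + q₂⁻¹) {F H : ℝ → ℝ≥0∞} (hF : Measurable F) (hH : Measurable H) :
    haarLqNorm q (fun t => F t * H t) ≤ haarLqNorm q₁ F * haarLqNorm q₂ H := by
  rcases eq_or_ne q₁ ⊤ with rfl | hq₁'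
  · obtain rfl : q = q₂ := by simpa using hqe
    exact haarLqNorm_mul_le_top_mul hq₂ F hH
  rcases eq_or_ne q₂ ⊤ with rfl | hq₂'
  · obtain rfl : q = q₁ := by simpa using hqe
    simp_rw [mul_comm (F _), mul_comm (haarLqNorm q F)]
    exact haarLqNorm_mul_le_top_mul hq₁ H hF
  exact haarLqNorm_mul_le_of_ne_top hq₁ hq₁' hq₂ hq₂' hqe hF hH

section Rearrangement

variable {α E : Type*} [MeasurableSpace α] (μ : Measure α)

def distribution [Norm E] (f : α → E) (l : ℝ) : ℝ≥0∞ := μ {x | l < ‖f x‖}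

noncomputable def rearrangement [Norm E] (f : α → E) : ℝ → ℝ≥0∞ :=
  superlevelVolume (distribution μ f)

variable {μ}

theorem antitone_distribution [Norm E] (f : α → E) : Antitone (distribution μ f) :=
  fun _ _ hll' => measure_mono fun _ hx => hll'.trans_lt hx

theorem measurable_rearrangement [Norm E] (f : α → E) : Measurable (rearrangement μ f) :=
  (antitone_superlevelVolume _).measurable

theorem distribution_zero_le [Norm E] {f : α → E} {c : ℝ≥0∞}
    (h : ∀ l : ℝ, 0 < l → distribution μ f l ≤ c) : distribution μ f 0 ≤ c := by
  have hU : {x | 0 < ‖f x‖} = ⋃ n : ℕ, {x | 1 / ((n : ℝ) + 1) < ‖f x‖} := by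
    ext x
    simp only [mem_ofPred_eq, mem_iUnion]
    exact ⟨exists_nat_one_div_lt, fun ⟨_, hn⟩ => Nat.one_div_pos_of_nat.trans hn⟩
  have hmono : Monotone fun n : ℕ => {x | 1 / ((n : ℝ) + 1) < ‖f x‖} :=
    fun _ _ hmn _ hx => (Nat.one_div_le_one_div hmn).trans_lt (mem_ofPred.1 hx)
  rw [distribution, hU, hmono.measure_iUnion]
  exact iSup_le fun n => h _ Nat.one_div_pos_of_nat

variable [NonUnitalSeminormedRing E]

theorem distribution_mul_le {f g : α → E} {a b : ℝ} (ha : 0 ≤ a) :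
    distribution μ (fun x => f x * g x) (a * b) ≤ distribution μ f a + distribution μ g b := by
  refine (measure_mono fun x hx => ?_).trans (measure_union_le _ _)
  by_contra hx'
  simp only [mem_union, mem_ofPred_eq, not_or, not_lt] at hx'
  exact hx.not_ge ((norm_mul_le _ _).trans (mul_le_mul hx'.1 hx'.2 (norm_nonneg _) ha))

theorem distribution_mul_le_left {f g : α → E} {l : ℝ} (hl : 0 ≤ l) :
    distribution μ (fun x => f x * g x) l ≤ distribution μ f 0 :=
  measure_mono fun _ hx => lt_of_not_ge fun h =>
    hx.not_ge <| (norm_mul_le _ _).trans <|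
      (mul_nonpos_of_nonpos_of_nonneg h (norm_nonneg _)).trans hl

theorem distribution_mul_le_right {f g : α → E} {l : ℝ} (hl : 0 ≤ l) :
    distribution μ (fun x => f x * g x) l ≤ distribution μ g 0 :=
  measure_mono fun _ hx => lt_of_not_ge fun h =>
    hx.not_ge <| (norm_mul_le _ _).trans <|
      (mul_nonpos_of_nonneg_of_nonpos (norm_nonneg _) h).trans hl

theorem rearrangement_mul_le (f g : α → E) {t : ℝ} (ht : 0 < t) :
    rearrangement μ (fun x => f x * g x) (2 * t) ≤ rearrangement μ f t * rearrangement μ g t := by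
  have hf := antitone_distribution (μ := μ) f
  have hg := antitone_distribution (μ := μ) g
  have vanishing {u : α → E} (hu : rearrangement μ u t = 0) :
      distribution μ u 0 ≤ ENNReal.ofReal t :=
    distribution_zero_le fun l hl =>
      (antitone_distribution u).le_ofReal_of_superlevelVolume_lt (hu.trans_lt (ofReal_pos.2 hl))
  have h2t : ENNReal.ofReal t ≤ ENNReal.ofReal (2 * t) := ofReal_le_ofReal (by linarith)
  refine (antitone_distribution _).superlevelVolume_le fun l hl => ?_
  have hl0 : 0 ≤ l := ENNReal.ofReal_pos.1 (zero_le.trans_lt hl) |>.le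
  -- `0 * ∞ = 0`, so a vanishing factor has to be treated on its own
  rcases eq_or_ne (rearrangement μ f t) 0 with hf0 | hf0
  · exact (distribution_mul_le_left hl0).trans ((vanishing hf0).trans h2t)
  rcases eq_or_ne (rearrangement μ g t) 0 with hg0 | hg0
  · exact (distribution_mul_le_right hl0).trans ((vanishing hg0).trans h2t)
  have hfin := hl.trans ofReal_lt_top |>.ne
  obtain ⟨a, b, ha, hb, hab⟩ := exists_lt_ofReal_mul_le
    (fun h => hfin (mul_eq_top.2 (.inr ⟨h, hg0⟩))) (fun h => hfin (mul_eq_top.2 (.inl ⟨hf0, h⟩))) hl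
  have ha0 : 0 ≤ a := ENNReal.ofReal_pos.1 (zero_le.trans_lt ha) |>.le
  calc distribution μ (fun x => f x * g x) l
      ≤ distribution μ (fun x => f x * g x) (a * b) := antitone_distribution _ hab
    _ ≤ distribution μ f a + distribution μ g b := distribution_mul_le ha0
    _ ≤ ENNReal.ofReal t + ENNReal.ofReal t :=
        add_le_add (hf.le_ofReal_of_superlevelVolume_lt ha) (hg.le_ofReal_of_superlevelVolume_lt hb)
    _ = ENNReal.ofReal (2 * t) := by rw [← ofReal_add ht.le ht.le, two_mul]

theorem rpow_mul_rearrangement_mul_le {p p₁ p₂ : ℝ} (hpe : 1 / p = 1 / p₁ + 1 / p₂) (f g : α → E)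
    {t : ℝ} (ht : 0 < t) :
    ENNReal.ofReal (2 * t) ^ (1 / p) * rearrangement μ (fun x => f x * g x) (2 * t) ≤
      ENNReal.ofReal 2 ^ (1 / p) * ((ENNReal.ofReal t ^ (1 / p₁) * rearrangement μ f t) *
        (ENNReal.ofReal t ^ (1 / p₂) * rearrangement μ g t)) := by
  have ht' : ENNReal.ofReal t ≠ 0 := by simpa using ht
  calc ENNReal.ofReal (2 * t) ^ (1 / p) * rearrangement μ (fun x => f x * g x) (2 * t)
      = ENNReal.ofReal 2 ^ (1 / p) * (ENNReal.ofReal t ^ (1 / p₁) * ENNReal.ofReal t ^ (1 / p₂)) *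
          rearrangement μ (fun x => f x * g x) (2 * t) := by
        rw [ofReal_mul zero_le_two, mul_rpow_of_ne_top ofReal_ne_top ofReal_ne_top, hpe,
          rpow_add _ _ ht' ofReal_ne_top]
    _ ≤ ENNReal.ofReal 2 ^ (1 / p) * (ENNReal.ofReal t ^ (1 / p₁) * ENNReal.ofReal t ^ (1 / p₂)) *
          (rearrangement μ f t * rearrangement μ g t) := by
        gcongr
        exact rearrangement_mul_le f g ht
    _ = _ := by ring

theorem haarLqNorm_rearrangement_mul_le {p p₁ p₂ : ℝ} (hpe : 1 / p = 1 / p₁ + 1 / p₂)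
    {q q₁ q₂ : ℝ≥0∞} (hq₁ : q₁ ≠ 0) (hq₂ : q₂ ≠ 0) (hqe : q⁻¹ = q₁⁻¹ + q₂⁻¹) (f g : α → E) :
    haarLqNorm q (fun t => ENNReal.ofReal t ^ (1 / p) * rearrangement μ (fun x => f x * g x) t) ≤
      ENNReal.ofReal 2 ^ (1 / p) *
        (haarLqNorm q₁ (fun t => ENNReal.ofReal t ^ (1 / p₁) * rearrangement μ f t) *
          haarLqNorm q₂ (fun t => ENNReal.ofReal t ^ (1 / p₂) * rearrangement μ g t)) := by
  have hmeas (p' : ℝ) (u : α → E) :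
      Measurable fun t => ENNReal.ofReal t ^ (1 / p') * rearrangement μ u t :=
    (measurable_ofReal.pow_const _).mul (measurable_rearrangement u)
  calc haarLqNorm q (fun t => ENNReal.ofReal t ^ (1 / p) * rearrangement μ (fun x => f x * g x) t)
      = haarLqNorm q (fun t => ENNReal.ofReal (2 * t) ^ (1 / p) *
          rearrangement μ (fun x => f x * g x) (2 * t)) := (haarLqNorm_comp_mul two_pos _).symm
    _ ≤ haarLqNorm q (fun t => ENNReal.ofReal 2 ^ (1 / p) *
          ((ENNReal.ofReal t ^ (1 / p₁) * rearrangement μ f t) *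
            (ENNReal.ofReal t ^ (1 / p₂) * rearrangement μ g t))) :=
        haarLqNorm_mono fun t ht => rpow_mul_rearrangement_mul_le hpe f g ht
    _ ≤ _ := by
        rw [haarLqNorm_const_mul (ne_zero_of_inv_eq_inv_add_inv hq₁ hq₂ hqe) ?_]
        · gcongr
          exact haarLqNorm_mul_le hq₁ hq₂ hqe (hmeas p₁ f) (hmeas p₂ g)
        exact (hmeas p₁ f).mul (hmeas p₂ g)

theorem lorentzNorm_top_eq_iSup_rearrangement {p : ℝ} (hp : 0 < p) (f : α → ℂ) :
    lorentzNorm μ p ⊤ f = ⨆ (t : ℝ) (_ : 0 < t), ENNReal.ofReal t ^ (1 / p) * rearrangement μ f t :=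
  (antitone_distribution f).iSup_ofReal_mul_rpow (one_div_pos.2 hp)

theorem lorentzNorm_eq_lintegral_rearrangement {p : ℝ} (hp : 0 < p) {q : ℝ≥0∞} (hq : q ≠ 0)
    (hq' : q ≠ ⊤) (f : α → ℂ) :
    lorentzNorm μ p q f = ((ENNReal.ofReal p)⁻¹ * ∫⁻ t in Ioi 0,
      ENNReal.ofReal t ^ (q.toReal / p - 1) * rearrangement μ f t ^ q.toReal) ^ (1 / q.toReal) := by
  have hr : 0 < q.toReal := toReal_pos hq hq'
  have hc : ENNReal.ofReal (q.toReal / p) / ENNReal.ofReal q.toReal = (ENNReal.ofReal p)⁻¹ := by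
    rw [ofReal_div_of_pos hp, div_eq_mul_inv, div_eq_mul_inv, mul_right_comm,
      ENNReal.mul_inv_cancel (by simpa using hr) ofReal_ne_top, one_mul]
  rw [lorentzNorm, if_neg hq', ← hc, rearrangement,
    ← (antitone_distribution f).lintegral_rpow_mul_rpow hr (div_pos hr hp)]
  congr 1
  refine setLIntegral_congr_fun measurableSet_Ioi fun l hl => ?_
  have h := ofReal_rpow_mul_mul_inv hl hr.le (distribution μ f l ^ (1 / p)) 1
  rwa [rpow_one, one_mul, ← rpow_mul, one_div_mul_eq_div] at h

theorem haarLqNorm_rpow_mul_rearrangement {p : ℝ} (hp : 0 < p) {q : ℝ≥0∞} (hq : q ≠ 0)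
    (f : α → ℂ) :
    haarLqNorm q (fun t => ENNReal.ofReal t ^ (1 / p) * rearrangement μ f t) =
      ENNReal.ofReal p ^ (1 / q.toReal) * lorentzNorm μ p q f := by
  rcases eq_or_ne q ⊤ with rfl | hq'
  -- for `q = ∞` the factor is `p ^ (1 / 0) = 1`
  · rw [toReal_top, _root_.div_zero, rpow_zero, one_mul, haarLqNorm_top,
      lorentzNorm_top_eq_iSup_rearrangement hp]
  have hr : 0 < q.toReal := toReal_pos hq hq'
  have hp' : ENNReal.ofReal p ^ (1 / q.toReal) ≠ 0 := (rpow_pos (ofReal_pos.2 hp) ofReal_ne_top).ne'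
  rw [lorentzNorm_eq_lintegral_rearrangement hp hq hq', mul_rpow_of_nonneg _ _ (by positivity),
    inv_rpow, ← mul_assoc, ENNReal.mul_inv_cancel hp' (by finiteness), one_mul,
    haarLqNorm_of_ne_top hq']
  congr 1
  refine setLIntegral_congr_fun measurableSet_Ioi fun t ht => ?_
  rw [ofReal_rpow_mul_mul_inv ht hr.le, one_div_mul_eq_div]

end Rearrangement

theorem lorentzNorm_mul_le {α : Type*} [MeasurableSpace α] (μ : Measure α) {p p₁ p₂ : ℝ}
    (hp₁ : 0 < p₁) (hp₂ : 0 < p₂) (hpe : 1 / p = 1 / p₁ + 1 / p₂) {q q₁ q₂ : ℝ≥0∞}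
    (hq₁ : q₁ ≠ 0) (hq₂ : q₂ ≠ 0) (hqe : q⁻¹ = q₁⁻¹ + q₂⁻¹) (f g : α → ℂ) :
    lorentzNorm μ p q (fun x => f x * g x) ≤
      ENNReal.ofReal p⁻¹ ^ (1 / q.toReal) * ENNReal.ofReal 2 ^ (1 / p) *
        ENNReal.ofReal p₁ ^ (1 / q₁.toReal) * ENNReal.ofReal p₂ ^ (1 / q₂.toReal) *
          (lorentzNorm μ p₁ q₁ f * lorentzNorm μ p₂ q₂ g) := by
  have hp := pos_of_one_div_eq_add hp₁ hp₂ hpe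
  have key := haarLqNorm_rearrangement_mul_le (μ := μ) hpe hq₁ hq₂ hqe f g
  rw [haarLqNorm_rpow_mul_rearrangement hp (ne_zero_of_inv_eq_inv_add_inv hq₁ hq₂ hqe),
    haarLqNorm_rpow_mul_rearrangement hp₁ hq₁, haarLqNorm_rpow_mul_rearrangement hp₂ hq₂,
    mul_le_iff_le_inv (rpow_pos (ofReal_pos.2 hp) ofReal_ne_top).ne' (by finiteness)] at key
  rw [ofReal_inv_of_pos hp, inv_rpow]
  exact key.trans_eq (by ring)

theorem lorentz_holder_general {α : Type*} [MeasurableSpace α] (μ : Measure α)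
    (p p₁ p₂ : ℝ) (hp₁ : 1 ≤ p₁) (hp₂ : 1 ≤ p₂)
    (q q₁ q₂ : ℝ≥0∞) (hq₁ : 1 ≤ q₁) (hq₂ : 1 ≤ q₂)
    (hpe : 1 / p = 1 / p₁ + 1 / p₂) (hqe : q⁻¹ = q₁⁻¹ + q₂⁻¹) :
    ∃ C : ℝ, 0 < C ∧ ∀ f g : α → ℂ, Measurable f → Measurable g →
      lorentzNorm μ p q (fun x => f x * g x) ≤
        ENNReal.ofReal C * (lorentzNorm μ p₁ q₁ f * lorentzNorm μ p₂ q₂ g) := by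
  obtain ⟨C, hC, hD⟩ := exists_pos_real_le_ofReal (D := ENNReal.ofReal p⁻¹ ^ (1 / q.toReal) *
    ENNReal.ofReal 2 ^ (1 / p) * ENNReal.ofReal p₁ ^ (1 / q₁.toReal) *
      ENNReal.ofReal p₂ ^ (1 / q₂.toReal)) (by finiteness)
  refine ⟨C, hC, fun f g _ _ => (lorentzNorm_mul_le μ (by linarith) (by linarith) hpe
    (zero_lt_one.trans_le hq₁).ne' (zero_lt_one.trans_le hq₂).ne' hqe f g).trans ?_⟩
  gcongr

/-- Hölder's inequality in Lorentz spaces: if `1/p = 1/p₁ + 1/p₂` and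
`1/q = 1/q₁ + 1/q₂`, then `‖f·g‖_{L^{p,q}} ≤ C ‖f‖_{L^{p₁,q₁}} ‖g‖_{L^{p₂,q₂}}`. -/
theorem lorentz_holder {α : Type*} [MeasurableSpace α] (μ : Measure α) [SigmaFinite μ]
    (p p₁ p₂ : ℝ) (hp : 1 ≤ p) (hp₁ : 1 ≤ p₁) (hp₂ : 1 ≤ p₂)
    (q q₁ q₂ : ℝ≥0∞) (hq : 1 ≤ q) (hq₁ : 1 ≤ q₁) (hq₂ : 1 ≤ q₂)
    (hpe : 1 / p = 1 / p₁ + 1 / p₂) (hqe : q⁻¹ = q₁⁻¹ + q₂⁻¹) :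
    ∃ C : ℝ, 0 < C ∧ ∀ f g : α → ℂ, Measurable f → Measurable g →
      lorentzNorm μ p q (fun x => f x * g x) ≤
        ENNReal.ofReal C * (lorentzNorm μ p₁ q₁ f * lorentzNorm μ p₂ q₂ g) :=
  lorentz_holder_general μ p p₁ p₂ hp₁ hp₂ q q₁ q₂ hq₁ hq₂ hpe hqe
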